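/- arXiv:0909.5573 — 2 statements merged into one kernel-verified Lean document; each statement's English description precedes it below -/
import Mathlib

section
/- Let q ≥ 2 and define for real μ the quantities D(μ) = (q−1−2μq)² − 4q and α±(μ) = μ − (q−1)/(2q) ± √(D(μ))/(2q). If μ ∈ (−1/q, 1) and D(μ) > 0, then |α+(μ)| < 1 and |α−(μ)| < 1. -/
/-- For `q ≥ 2`, `μ ∈ (-1/q, 1)` with `D(μ) = (q-1-2μq)² - 4q > 0`, both roots
`α±(μ) = μ - (q-1)/(2q) ± √(D(μ))/(2q)` have absolute value `< 1`. -/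
theorem stmt_11 (q : ℕ) (hq : 2 ≤ q) (μ : ℝ)
    (hμ1 : -1 / (q : ℝ) < μ) (hμ2 : μ < 1)
    (hD : 0 < ((q : ℝ) - 1 - 2 * μ * q) ^ 2 - 4 * q) :
    |μ - ((q : ℝ) - 1) / (2 * q) +
        Real.sqrt (((q : ℝ) - 1 - 2 * μ * q) ^ 2 - 4 * q) / (2 * q)| < 1 ∧
    |μ - ((q : ℝ) - 1) / (2 * q) -
        Real.sqrt (((q : ℝ) - 1 - 2 * μ * q) ^ 2 - 4 * q) / (2 * q)| < 1 := by
  have hq2 : (2 : ℝ) ≤ (q : ℝ) := by exact_mod_cast hq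
  have hqpos : (0 : ℝ) < (q : ℝ) := by linarith
  have hμq : -1 < μ * q := by
    have := (div_lt_iff₀ hqpos).mp (by linarith [hμ1] : (-1 : ℝ) / q < μ)
    linarith
  set D : ℝ := ((q : ℝ) - 1 - 2 * μ * q) ^ 2 - 4 * q with hDdef
  set s : ℝ := Real.sqrt D with hsdef
  have hs0 : 0 ≤ s := Real.sqrt_nonneg _
  have hs2 : s ^ 2 = D := Real.sq_sqrt hD.le
  -- s < 3q - 1 - 2μq
  have h1 : s < 3 * q - 1 - 2 * μ * q := by
    rw [hsdef]
    rw [Real.sqrt_lt' (by nlinarith)]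
    nlinarith [mul_pos (mul_pos hqpos hqpos) (sub_pos.mpr hμ2)]
  -- s < q + 1 + 2μq
  have h2 : s < (q : ℝ) + 1 + 2 * μ * q := by
    rw [hsdef]
    rw [Real.sqrt_lt' (by nlinarith)]
    nlinarith [mul_pos hqpos (by linarith : (0:ℝ) < 1 + μ * q)]
  have h2q : (0 : ℝ) < 2 * q := by linarith
  have hq2q : ((2:ℝ) * q) ≠ 0 := by positivity
  have e1 : μ - ((q : ℝ) - 1) / (2 * q) + s / (2 * q)
      = (2 * μ * q - ((q : ℝ) - 1) + s) / (2 * q) := by field_simp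
  have e2 : μ - ((q : ℝ) - 1) / (2 * q) - s / (2 * q)
      = (2 * μ * q - ((q : ℝ) - 1) - s) / (2 * q) := by field_simp
  constructor <;> rw [abs_lt] <;> constructor
  · rw [e1, lt_div_iff₀ h2q]; linarith
  · rw [e1, div_lt_one h2q]; linarith
  · rw [e2, lt_div_iff₀ h2q]; linarith
  · rw [e2, div_lt_one h2q]; linarith
end

section
/- Let G be a finite connected simple semiregular bipartite graph in which every edge joins a vertex of degree p+1 to a vertex of degree q+1, with p < q. Then the adjacency matrix of the line graph L(G) has no eigenvalue λ with p−1 < λ < q−1. Equivalently, the edge Laplacian L' = A_{L(G)}/(p+q) has no eigenvalue μ with (p−1)/(p+q) < μ < (q−1)/(p+q). -/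
open scoped Classical

lemma aux_BtB {V : Type*} [Fintype V] [DecidableEq V] (G : SimpleGraph V)
    (e f : G.edgeSet) :
    (∑ v, (if v ∈ (e : Sym2 V) then (1:ℝ) else 0) * (if v ∈ (f : Sym2 V) then 1 else 0))
      = (if G.lineGraph.Adj e f then 1 else 0) + (if e = f then 2 else 0) := by
  classical
  obtain ⟨e, he⟩ := e
  obtain ⟨f, hf⟩ := f
  induction e using Sym2.ind with
  | _ a b =>
  have hab : a ≠ b := G.ne_of_adj (G.mem_edgeSet.mp he)
  have hsum : (∑ v, (if v ∈ (s(a,b) : Sym2 V) then (1:ℝ) else 0) * (if v ∈ f then 1 else 0))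
      = (if a ∈ f then (1:ℝ) else 0) + (if b ∈ f then 1 else 0) := by
    have hpt : ∀ v : V, (if v ∈ (s(a,b) : Sym2 V) then (1:ℝ) else 0) * (if v ∈ f then 1 else 0)
        = (if v = a then (if a ∈ f then (1:ℝ) else 0) else 0)
          + (if v = b then (if b ∈ f then 1 else 0) else 0) := by
      intro v
      by_cases hva : v = a <;> by_cases hvb : v = b <;> simp_all [Sym2.mem_iff]
    rw [Finset.sum_congr rfl fun v _ => hpt v, Finset.sum_add_distrib]
    simp
  rw [hsum]
  have hadj : G.lineGraph.Adj ⟨s(a,b), he⟩ ⟨f, hf⟩ ↔ s(a,b) ≠ f ∧ (a ∈ f ∨ b ∈ f) := by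
    rw [SimpleGraph.lineGraph_adj_iff_exists]
    simp [Subtype.ext_iff, Sym2.mem_iff, eq_comm]
  have hef : (⟨s(a,b), he⟩ : G.edgeSet) = ⟨f, hf⟩ ↔ s(a,b) = f := Subtype.ext_iff
  by_cases h : s(a,b) = f
  · subst h
    simp [hadj, Sym2.mem_iff]
    norm_num
  · have hnotboth : ¬(a ∈ f ∧ b ∈ f) := by
      rw [Sym2.mem_and_mem_iff hab]
      exact fun hh => h hh.symm
    by_cases ha : a ∈ f <;> by_cases hb : b ∈ f <;> simp_all [hadj, hef]

lemma aux_BBt {V : Type*} [Fintype V] [DecidableEq V] (G : SimpleGraph V) (v w : V) :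
    (∑ e : G.edgeSet, (if v ∈ (e : Sym2 V) then (1:ℝ) else 0) * (if w ∈ (e : Sym2 V) then 1 else 0))
      = if v = w then (G.degree v : ℝ) else if G.Adj v w then 1 else 0 := by
  classical
  by_cases hvw : v = w
  · subst hvw
    simp only [if_pos rfl]
    have : (∑ e : G.edgeSet, (if v ∈ (e : Sym2 V) then (1:ℝ) else 0) * (if v ∈ (e : Sym2 V) then 1 else 0))
        = ∑ e : G.edgeSet, (if v ∈ (e : Sym2 V) then (1:ℝ) else 0) := by
      refine Finset.sum_congr rfl fun e _ => ?_
      by_cases h : v ∈ (e : Sym2 V) <;> simp [h]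
    rw [this, Finset.sum_boole]
    norm_cast
    simp only [if_true]
    rw [← Fintype.card_subtype, ← SimpleGraph.card_incidenceSet_eq_degree]
    apply Fintype.card_congr
    exact (Equiv.subtypeSubtypeEquivSubtypeInter (· ∈ G.edgeSet) (v ∈ ·))
  · rw [if_neg hvw]
    by_cases hadj : G.Adj v w
    · rw [if_pos hadj]
      have hmem : s(v,w) ∈ G.edgeSet := G.mem_edgeSet.mpr hadj
      rw [Finset.sum_eq_single_of_mem (⟨s(v,w), hmem⟩ : G.edgeSet) (Finset.mem_univ _)]
      · simp [Sym2.mem_iff]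
      · intro e _ hne
        have : ¬(v ∈ (e : Sym2 V) ∧ w ∈ (e : Sym2 V)) := by
          rw [Sym2.mem_and_mem_iff hvw]
          intro hh
          exact hne (Subtype.ext hh)
        by_cases h1 : v ∈ (e : Sym2 V) <;> by_cases h2 : w ∈ (e : Sym2 V) <;> simp_all
    · rw [if_neg hadj]
      refine Finset.sum_eq_zero fun e _ => ?_
      have : ¬(v ∈ (e : Sym2 V) ∧ w ∈ (e : Sym2 V)) := by
        rw [Sym2.mem_and_mem_iff hvw]
        intro hh
        exact hadj (G.mem_edgeSet.mp (hh ▸ e.2))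
      by_cases h1 : v ∈ (e : Sym2 V) <;> by_cases h2 : w ∈ (e : Sym2 V) <;> simp_all

/-- Spectral gap lemma for semiregular bipartite graphs: if every edge of a finite
connected simple semiregular bipartite graph `G` joins a vertex of degree `p+1` to one
of degree `q+1`, with `p < q`, then the adjacency matrix of the line graph `L(G)` has
no eigenvalue `lam` with `p-1 < lam < q-1`; equivalently, the edge Laplacian
`L' = A_{L(G)}/(p+q)` has no eigenvalue `μ` with `(p-1)/(p+q) < μ < (q-1)/(p+q)`. -/
theorem stmt_14 (p q : ℕ) (hpq : p < q) {V : Type*} [Fintype V] [DecidableEq V]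
    (G : SimpleGraph V) (hGconn : G.Connected)
    (P Q : Set V) (hPQ : ∀ v : V, v ∈ P ↔ v ∉ Q)
    (hbip : ∀ v w : V, G.Adj v w → (v ∈ P ↔ w ∈ Q))
    (hdegP : ∀ v ∈ P, G.degree v = p + 1)
    (hdegQ : ∀ v ∈ Q, G.degree v = q + 1) :
    (∀ lam : ℝ,
      (∃ g : G.edgeSet → ℝ, g ≠ 0 ∧
        ((G.lineGraph).adjMatrix ℝ).mulVec g = lam • g) →
      ¬((p : ℝ) - 1 < lam ∧ lam < (q : ℝ) - 1)) ∧
    ∀ μ : ℝ,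
      (∃ g : G.edgeSet → ℝ, g ≠ 0 ∧
        (((p : ℝ) + q)⁻¹ • (G.lineGraph).adjMatrix ℝ).mulVec g = μ • g) →
      ¬(((p : ℝ) - 1) / (p + q) < μ ∧ μ < ((q : ℝ) - 1) / (p + q)) := by
  classical
  have hp0 : (0:ℝ) ≤ (p:ℝ) := Nat.cast_nonneg p
  have hq1 : (1:ℝ) ≤ (q:ℝ) := by exact_mod_cast Nat.one_le_iff_ne_zero.mpr (by omega)
  have main : ∀ lam : ℝ,
      (∃ g : G.edgeSet → ℝ, g ≠ 0 ∧
        ((G.lineGraph).adjMatrix ℝ).mulVec g = lam • g) →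
      ¬((p : ℝ) - 1 < lam ∧ lam < (q : ℝ) - 1) := by
    rintro lam ⟨g, hg0, hgeig⟩ ⟨hl1, hl2⟩
    set B : V → G.edgeSet → ℝ := fun v e => if v ∈ (e : Sym2 V) then 1 else 0 with hB
    set h : V → ℝ := fun v => ∑ e, B v e * g e with hh
    have heig : ∀ f : G.edgeSet,
        (∑ e, (if G.lineGraph.Adj f e then (1:ℝ) else 0) * g e) = lam * g f := by
      intro f
      have := congrFun hgeig f
      simpa [Matrix.mulVec, dotProduct, SimpleGraph.adjMatrix_apply] using this
    -- key1 : Bᵀ h = (lam+2) g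
    have key1 : ∀ f : G.edgeSet, (∑ v, h v * B v f) = (lam + 2) * g f := by
      intro f
      calc (∑ v, h v * B v f)
          = ∑ v, ∑ e, B v e * B v f * g e := by
            refine Finset.sum_congr rfl fun v _ => ?_
            rw [hh]
            simp only []
            rw [Finset.sum_mul]
            exact Finset.sum_congr rfl fun e _ => by ring
        _ = ∑ e, (∑ v, B v e * B v f) * g e := by
            rw [Finset.sum_comm]
            exact Finset.sum_congr rfl fun e _ => by rw [Finset.sum_mul]
        _ = ∑ e, ((if G.lineGraph.Adj e f then (1:ℝ) else 0) + (if e = f then 2 else 0)) * g e := by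
            exact Finset.sum_congr rfl fun e _ => by rw [aux_BtB]
        _ = (∑ e, (if G.lineGraph.Adj f e then (1:ℝ) else 0) * g e)
              + ∑ e, (if e = f then (2:ℝ) else 0) * g e := by
            rw [← Finset.sum_add_distrib]
            refine Finset.sum_congr rfl fun e _ => ?_
            rw [add_mul]
            congr 2
            simp [SimpleGraph.adj_comm]
        _ = lam * g f + 2 * g f := by
            rw [heig f]
            congr 1
            simp [ite_mul]
        _ = (lam + 2) * g f := by ring
    -- key2 : (A + D) h = (lam+2) h
    have key2 : ∀ v : V,
        (∑ w, (if G.Adj v w then h w else 0)) + (G.degree v : ℝ) * h v = (lam + 2) * h v := by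
      intro v
      have mid : (∑ w, (∑ e, B v e * B w e) * h w)
          = ∑ w, (if v = w then (G.degree v : ℝ) else if G.Adj v w then 1 else 0) * h w :=
        Finset.sum_congr rfl fun w _ => by rw [aux_BBt]
      have lhs_eq : (∑ w, (if v = w then (G.degree v : ℝ) else if G.Adj v w then 1 else 0) * h w)
          = (G.degree v : ℝ) * h v + ∑ w, (if G.Adj v w then h w else 0) := by
        have hpt : ∀ w : V,
            (if v = w then (G.degree v : ℝ) else if G.Adj v w then 1 else 0) * h w
            = (if w = v then (G.degree v : ℝ) * h w else 0) + (if G.Adj v w then h w else 0) := by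
          intro w
          by_cases hvw : v = w
          · subst hvw
            simp [G.irrefl]
          · by_cases ha : G.Adj v w <;> simp [hvw, Ne.symm hvw, ha]
        rw [Finset.sum_congr rfl fun w _ => hpt w, Finset.sum_add_distrib]
        congr 1
        simp
      have other : (∑ w, (∑ e, B v e * B w e) * h w) = (lam + 2) * h v := by
        calc (∑ w, (∑ e, B v e * B w e) * h w)
            = ∑ w, ∑ e, B v e * (h w * B w e) := by
              refine Finset.sum_congr rfl fun w _ => ?_
              rw [Finset.sum_mul]
              exact Finset.sum_congr rfl fun e _ => by ring
          _ = ∑ e, B v e * (∑ w, h w * B w e) := by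
              rw [Finset.sum_comm]
              exact Finset.sum_congr rfl fun e _ => by rw [Finset.mul_sum]
          _ = ∑ e, B v e * ((lam + 2) * g e) := by
              exact Finset.sum_congr rfl fun e _ => by rw [key1]
          _ = (lam + 2) * ∑ e, B v e * g e := by
              rw [Finset.mul_sum]
              exact Finset.sum_congr rfl fun e _ => by ring
          _ = (lam + 2) * h v := by rw [hh]
      rw [mid, lhs_eq] at other
      linarith [other]
    -- norm of h
    have hnu : (0:ℝ) < lam + 2 := by linarith
    have hgsq : (0:ℝ) < ∑ e, (g e)^2 := by
      obtain ⟨e0, he0⟩ := Function.ne_iff.mp hg0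
      refine Finset.sum_pos' (fun e _ => sq_nonneg _) ⟨e0, Finset.mem_univ _, ?_⟩
      exact lt_of_le_of_ne (sq_nonneg _) (Ne.symm (pow_ne_zero 2 he0))
    have hnormh : (∑ v, (h v)^2) = (lam + 2) * ∑ e, (g e)^2 := by
      calc (∑ v, (h v)^2)
          = ∑ v, ∑ e, h v * B v e * g e := by
            refine Finset.sum_congr rfl fun v _ => ?_
            rw [sq, hh]
            simp only []
            rw [Finset.mul_sum]
            exact Finset.sum_congr rfl fun e _ => by ring
        _ = ∑ e, (∑ v, h v * B v e) * g e := by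
            rw [Finset.sum_comm]
            exact Finset.sum_congr rfl fun e _ => by rw [Finset.sum_mul]
        _ = ∑ e, ((lam + 2) * g e) * g e := by
            exact Finset.sum_congr rfl fun e _ => by rw [key1]
        _ = (lam + 2) * ∑ e, (g e)^2 := by
            rw [Finset.mul_sum]
            exact Finset.sum_congr rfl fun e _ => by ring
    have hhsq : (0:ℝ) < ∑ v, (h v)^2 := by
      rw [hnormh]; exact mul_pos hnu hgsq
    -- restricted sums
    set Pf : Finset V := Finset.univ.filter (· ∈ P) with hPf
    set Qf : Finset V := Finset.univ.filter (· ∈ Q) with hQf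
    set sP : ℝ := ∑ v ∈ Pf, (h v)^2 with hsP
    set sQ : ℝ := ∑ v ∈ Qf, (h v)^2 with hsQ
    set s : ℝ := ∑ v ∈ Pf, h v * (∑ w, if G.Adj v w then h w else 0) with hs
    have memPf : ∀ v, v ∈ Pf ↔ v ∈ P := by intro v; simp [hPf]
    have memQf : ∀ v, v ∈ Qf ↔ v ∈ Q := by intro v; simp [hQf]
    have hPnotQ : ∀ v, v ∈ P → v ∉ Q := fun v hv => (hPQ v).mp hv
    have hQnotP : ∀ v, v ∈ Q → v ∉ P := fun v hv hp => (hPQ v).mp hp hv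
    have hnotPQ : ∀ v, v ∉ P → v ∈ Q := fun v hv => by
      by_contra hq; exact hv ((hPQ v).mpr hq)
    have eqP : s = (lam + 2 - ((p:ℝ)+1)) * sP := by
      rw [hs, hsP, Finset.mul_sum]
      refine Finset.sum_congr rfl fun v hv => ?_
      have hvP : v ∈ P := (memPf v).mp hv
      have h2 := key2 v
      rw [hdegP v hvP] at h2
      push_cast at h2
      have : (∑ w, if G.Adj v w then h w else 0) = (lam + 2 - ((p:ℝ)+1)) * h v := by linarith
      rw [this]; ring
    -- cross equality
    have hcross : s = ∑ w ∈ Qf, h w * (∑ v, if G.Adj w v then h v else 0) := by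
      rw [hs]
      calc (∑ v ∈ Pf, h v * (∑ w, if G.Adj v w then h w else 0))
          = ∑ v ∈ Pf, ∑ w, (if G.Adj v w then h v * h w else 0) := by
            refine Finset.sum_congr rfl fun v _ => ?_
            rw [Finset.mul_sum]
            exact Finset.sum_congr rfl fun w _ => by rw [mul_ite, mul_zero]
        _ = ∑ v ∈ Pf, ∑ w ∈ Qf, (if G.Adj v w then h v * h w else 0) := by
            refine Finset.sum_congr rfl fun v hv => ?_
            refine (Finset.sum_subset (Finset.subset_univ Qf) ?_).symm
            intro w _ hw
            have hwQ : w ∉ Q := fun hq => hw ((memQf w).mpr hq)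
            have : ¬ G.Adj v w := fun ha => hwQ ((hbip v w ha).mp ((memPf v).mp hv))
            rw [if_neg this]
        _ = ∑ w ∈ Qf, ∑ v ∈ Pf, (if G.Adj v w then h v * h w else 0) := Finset.sum_comm
        _ = ∑ w ∈ Qf, ∑ v, (if G.Adj v w then h v * h w else 0) := by
            refine Finset.sum_congr rfl fun w hw => ?_
            refine Finset.sum_subset (Finset.subset_univ Pf) ?_
            intro v _ hv
            have hvP : v ∉ P := fun hp => hv ((memPf v).mpr hp)
            have : ¬ G.Adj v w := fun ha => hvP ((hbip v w ha).mpr ((memQf w).mp hw))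
            rw [if_neg this]
        _ = ∑ w ∈ Qf, h w * (∑ v, if G.Adj w v then h v else 0) := by
            refine Finset.sum_congr rfl fun w _ => ?_
            rw [Finset.mul_sum]
            refine Finset.sum_congr rfl fun v _ => ?_
            rw [G.adj_comm, mul_ite, mul_zero]
            exact if_congr Iff.rfl (mul_comm _ _) rfl
    have eqQ : s = (lam + 2 - ((q:ℝ)+1)) * sQ := by
      rw [hcross, hsQ, Finset.mul_sum]
      refine Finset.sum_congr rfl fun w hw => ?_
      have hwQ : w ∈ Q := (memQf w).mp hw
      have h2 := key2 w
      rw [hdegQ w hwQ] at h2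
      push_cast at h2
      have : (∑ v, if G.Adj w v then h v else 0) = (lam + 2 - ((q:ℝ)+1)) * h w := by linarith
      rw [this]; ring
    -- conclude
    have hcP : (0:ℝ) < lam + 2 - ((p:ℝ)+1) := by linarith
    have hcQ : lam + 2 - ((q:ℝ)+1) < 0 := by linarith
    have hsPnn : (0:ℝ) ≤ sP := Finset.sum_nonneg fun v _ => sq_nonneg _
    have hsQnn : (0:ℝ) ≤ sQ := Finset.sum_nonneg fun v _ => sq_nonneg _
    have htotal : sP + sQ = ∑ v, (h v)^2 := by
      rw [hsP, hsQ]
      have hQfeq : Qf = Finset.univ.filter (fun v => ¬ v ∈ P) := by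
        ext v
        simp only [hQf, Finset.mem_filter, Finset.mem_univ, true_and]
        exact ⟨fun hq hp => hPnotQ v hp hq, fun hp => hnotPQ v hp⟩
      rw [hQfeq]
      exact Finset.sum_filter_add_sum_filter_not Finset.univ _ _
    have hsnn : (0:ℝ) ≤ s := by rw [eqP]; exact mul_nonneg hcP.le hsPnn
    have hsnp : s ≤ 0 := by
      rw [eqQ]; exact mul_nonpos_iff.mpr (Or.inr ⟨hcQ.le, hsQnn⟩)
    have hs0 : s = 0 := le_antisymm hsnp hsnn
    have hsP0 : sP = 0 := by
      rcases mul_eq_zero.mp (hs0 ▸ eqP.symm) with hc | hc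
      · linarith
      · exact hc
    have hsQ0 : sQ = 0 := by
      rcases mul_eq_zero.mp (hs0 ▸ eqQ.symm) with hc | hc
      · linarith
      · exact hc
    rw [← htotal, hsP0, hsQ0] at hhsq
    linarith
  refine ⟨main, ?_⟩
  rintro μ ⟨g, hg0, heig⟩ ⟨h1, h2⟩
  have hc : (0:ℝ) < (p:ℝ) + (q:ℝ) := by linarith
  refine main (((p:ℝ) + q) * μ) ⟨g, hg0, ?_⟩ ⟨?_, ?_⟩
  · rw [Matrix.smul_mulVec] at heig
    calc ((G.lineGraph).adjMatrix ℝ).mulVec g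
        = ((p:ℝ)+q) • (((p:ℝ)+q)⁻¹ • ((G.lineGraph).adjMatrix ℝ).mulVec g) := by
          rw [smul_smul, mul_inv_cancel₀ hc.ne', one_smul]
      _ = ((p:ℝ)+q) • (μ • g) := by rw [heig]
      _ = (((p:ℝ)+q) * μ) • g := by rw [smul_smul]
  · have := (div_lt_iff₀ hc).mp h1
    nlinarith [this]
  · have := (lt_div_iff₀ hc).mp h2
    nlinarith [this]
end
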